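/- Let Ω, ω ⊆ S^{n-1} satisfy span(Ω) = span(ω) = ℝ^n. For v ∈ Ω and u ∈ ω say v ⋈ u if v ∉ u^⊥. For v_1, v_2 ∈ Ω say v_1 ∼ v_2 if some u ∈ ω satisfies v_1 ⋈ u and v_2 ⋈ u; for u_1, u_2 ∈ ω say u_1 ∼ u_2 if some v ∈ Ω satisfies u_1 ⋈ v and u_2 ⋈ v. Let ≃ be the transitive closure of ∼ on Ω and on ω, with equivalence classes {[v_i] : i ∈ I} on Ω and {[u_j] : j ∈ J} on ω, and let V_i = span{v ∈ Ω : v ∈ [v_i]} and U_j = span{u ∈ ω : u ∈ [u_j]}. Then I and J are finite sets of the same cardinality i_0, and ℝ^n decomposes as the direct sum ℝ^n = V_1 ⊕ ⋯ ⊕ V_{i_0} = U_1 ⊕ ⋯ ⊕ U_{i_0}. -/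
import Mathlib


open Set
open scoped RealInnerProductSpace

noncomputable section

/-- Euclidean space `ℝ^n`. -/
abbrev Euc (n : ℕ) : Type := EuclideanSpace ℝ (Fin n)

/-- The "one step" relation `∼` on `Ω` (with respect to `ω`): `v₁ ∼ v₂` iff both lie
in `Ω` and there is `u ∈ ω` with `v₁ ⋈ u` and `v₂ ⋈ u`, where `v ⋈ u` means
`v ∉ u^⊥`, i.e. `⟨v, u⟩ ≠ 0`. -/
def SimRel {n : ℕ} (Ω ω : Set (Euc n)) (v1 v2 : Euc n) : Prop :=
  v1 ∈ Ω ∧ v2 ∈ Ω ∧ ∃ u ∈ ω, ⟪v1, u⟫ ≠ 0 ∧ ⟪v2, u⟫ ≠ 0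

/-- The relation `≃`: the transitive closure of `∼`. -/
def EqvRel {n : ℕ} (Ω ω : Set (Euc n)) : Euc n → Euc n → Prop :=
  Relation.TransGen (SimRel Ω ω)

/-- The collection of linear spans of the `≃`-equivalence classes of elements of `Ω`. -/
def ClassSpans {n : ℕ} (Ω ω : Set (Euc n)) : Set (Submodule ℝ (Euc n)) :=
  {W | ∃ v ∈ Ω, W = Submodule.span ℝ {v' | EqvRel Ω ω v v'}}

namespace St14

variable {n : ℕ} {Ω ω : Set (Euc n)}

lemma simRel_symm {a b : Euc n} (h : SimRel Ω ω a b) : SimRel Ω ω b a := by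
  obtain ⟨ha, hb, u, hu, h1, h2⟩ := h
  exact ⟨hb, ha, u, hu, h2, h1⟩

lemma eqvRel_symm {a b : Euc n} (h : EqvRel Ω ω a b) : EqvRel Ω ω b a := by
  induction h with
  | single h => exact Relation.TransGen.single (simRel_symm h)
  | tail _ h ih => exact Relation.TransGen.trans (Relation.TransGen.single (simRel_symm h)) ih

lemma eqvRel_trans {a b c : Euc n} (h : EqvRel Ω ω a b) (h' : EqvRel Ω ω b c) :
    EqvRel Ω ω a c := Relation.TransGen.trans h h'

lemma eqvRel_mem_left {a b : Euc n} (h : EqvRel Ω ω a b) : a ∈ Ω := by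
  induction h with
  | single h => exact h.1
  | tail _ _ ih => exact ih

lemma eqvRel_mem_right {a b : Euc n} (h : EqvRel Ω ω a b) : b ∈ Ω := eqvRel_mem_left (eqvRel_symm h)

lemma span_inner_zero {C : Set (Euc n)} {u x : Euc n} (h : ∀ v ∈ C, ⟪v, u⟫ = 0)
    (hx : x ∈ Submodule.span ℝ C) : ⟪x, u⟫ = 0 := by
  induction hx using Submodule.span_induction with
  | mem v hv => exact h v hv
  | zero => simp
  | add a b _ _ ha hb => simp [inner_add_left, ha, hb]
  | smul r a _ ha => rw [real_inner_smul_left, ha, mul_zero]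

lemma eq_zero_of_inner {S : Set (Euc n)} (hspan : Submodule.span ℝ S = ⊤) {x : Euc n}
    (h : ∀ u ∈ S, ⟪x, u⟫ = 0) : x = 0 := by
  have hx : x ∈ Submodule.span ℝ S := by rw [hspan]; trivial
  have := span_inner_zero (C := S) (u := x) (fun v hv => by
    rw [real_inner_comm]; exact h v hv) hx
  exact inner_self_eq_zero.mp this

lemma exists_touch {S : Set (Euc n)} (hspan : Submodule.span ℝ S = ⊤) {v : Euc n}
    (hv : v ≠ 0) : ∃ u ∈ S, ⟪v, u⟫ ≠ 0 := by
  by_contra h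
  push_neg at h
  exact hv (eq_zero_of_inner hspan h)

lemma ne_zero_of_mem {v : Euc n} (hΩ : Ω ⊆ Metric.sphere (0 : Euc n) 1) (hv : v ∈ Ω) :
    v ≠ 0 := by
  have := hΩ hv
  rw [mem_sphere_zero_iff_norm] at this
  intro h0
  rw [h0] at this; simp at this

lemma eqv_refl (hωspan : Submodule.span ℝ ω = ⊤) {v : Euc n} (hv : v ∈ Ω) (hv0 : v ≠ 0) :
    EqvRel Ω ω v v := by
  obtain ⟨u, hu, huv⟩ := exists_touch hωspan hv0
  exact Relation.TransGen.single ⟨hv, hv, u, hu, huv, huv⟩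

/-- Transfer of equivalence from `Ω` side to `ω` side. -/
lemma transfer {v v' : Euc n} (h : EqvRel Ω ω v v') :
    ∀ u ∈ ω, ∀ u' ∈ ω, ⟪v, u⟫ ≠ 0 → ⟪v', u'⟫ ≠ 0 → EqvRel ω Ω u u' := by
  induction h with
  | single h =>
    intro u hu u' hu' h1 h2
    obtain ⟨ha, hb, u0, hu0, g1, g2⟩ := h
    have s1 : SimRel ω Ω u u0 := ⟨hu, hu0, _, ha, by rwa [real_inner_comm], by rwa [real_inner_comm]⟩
    have s2 : SimRel ω Ω u0 u' := ⟨hu0, hu', _, hb, by rwa [real_inner_comm], by rwa [real_inner_comm]⟩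
    exact Relation.TransGen.trans (Relation.TransGen.single s1) (Relation.TransGen.single s2)
  | tail _ h ih =>
    intro u hu u' hu' h1 h2
    obtain ⟨hb, hc, u0, hu0, g1, g2⟩ := h
    have s2 : SimRel ω Ω u0 u' := ⟨hu0, hu', _, hc, by rwa [real_inner_comm], by rwa [real_inner_comm]⟩
    exact Relation.TransGen.trans (ih u hu u0 hu0 h1 g1) (Relation.TransGen.single s2)

/-- The `≃`-class of `v`. -/
def cls (Ω ω : Set (Euc n)) (v : Euc n) : Set (Euc n) := {v' | EqvRel Ω ω v v'}

lemma cls_eq {v v' : Euc n} (h : EqvRel Ω ω v v') : cls Ω ω v = cls Ω ω v' := by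
  ext x
  exact ⟨fun hx => eqvRel_trans (eqvRel_symm h) hx, fun hx => eqvRel_trans h hx⟩

/-- Separation: if `u` touches the class of `v` and `¬ v ≃ v'`, then `u ⊥` the class of `v'`. -/
lemma separation {v v' u : Euc n} (hne : ¬ EqvRel Ω ω v v') (hu : u ∈ ω)
    (htouch : ∃ v₁, EqvRel Ω ω v v₁ ∧ ⟪v₁, u⟫ ≠ 0) :
    ∀ v₂ ∈ cls Ω ω v', ⟪v₂, u⟫ = 0 := by
  intro v₂ hv₂
  by_contra hc
  obtain ⟨v₁, hv₁, hv₁u⟩ := htouch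
  have hv₂' : EqvRel Ω ω v' v₂ := hv₂
  have hsim : SimRel Ω ω v₁ v₂ := ⟨eqvRel_mem_right hv₁, eqvRel_mem_right hv₂',
    u, hu, hv₁u, hc⟩
  exact hne (eqvRel_trans (eqvRel_trans hv₁ (Relation.TransGen.single hsim)) (eqvRel_symm hv₂'))

/-- Key zero lemma. -/
lemma key_zero (hωspan : Submodule.span ℝ ω = ⊤) {v x : Euc n}
    (hx : x ∈ Submodule.span ℝ (cls Ω ω v))
    (hx2 : ∀ u ∈ ω, (∃ v₁, EqvRel Ω ω v v₁ ∧ ⟪v₁, u⟫ ≠ 0) → ⟪x, u⟫ = 0) : x = 0 := by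
  apply eq_zero_of_inner hωspan
  intro u hu
  by_cases hc : ∃ v₁, EqvRel Ω ω v v₁ ∧ ⟪v₁, u⟫ ≠ 0
  · exact hx2 u hu hc
  · push_neg at hc
    exact span_inner_zero (fun v₁ hv₁ => hc v₁ hv₁) hx

end St14

namespace St14

variable {n : ℕ} {Ω ω : Set (Euc n)}

lemma mem_classSpans {v : Euc n} (hv : v ∈ Ω) :
    Submodule.span ℝ (cls Ω ω v) ∈ ClassSpans Ω ω := ⟨v, hv, rfl⟩

lemma sSupIndep_classSpans (hωspan : Submodule.span ℝ ω = ⊤) :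
    sSupIndep (ClassSpans Ω ω) := by
  rintro W hW
  obtain ⟨v, hv, rfl⟩ := hW
  rw [Submodule.disjoint_def]
  intro x hx hx'
  refine key_zero hωspan hx ?_
  intro u hu htouch
  have hle : sSup (ClassSpans Ω ω \ {Submodule.span ℝ (cls Ω ω v)}) ≤ (ℝ ∙ u)ᗮ := by
    apply sSup_le
    rintro W' ⟨⟨v', hv', rfl⟩, hne⟩
    rw [Submodule.span_le]
    intro v₂ hv₂
    rw [SetLike.mem_coe, Submodule.mem_orthogonal_singleton_iff_inner_left]
    refine separation (fun he => hne ?_) hu htouch v₂ hv₂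
    rw [Set.mem_singleton_iff]
    exact congrArg (Submodule.span ℝ) (cls_eq he).symm
  exact Submodule.mem_orthogonal_singleton_iff_inner_left.mp (hle hx')

lemma sSup_classSpans (hΩ : Ω ⊆ Metric.sphere (0 : Euc n) 1)
    (hΩspan : Submodule.span ℝ Ω = ⊤) (hωspan : Submodule.span ℝ ω = ⊤) :
    sSup (ClassSpans Ω ω) = ⊤ := by
  rw [eq_top_iff, ← hΩspan, Submodule.span_le]
  intro v hv
  have hmem : v ∈ Submodule.span ℝ (cls Ω ω v) :=
    Submodule.subset_span (eqv_refl hωspan hv (ne_zero_of_mem hΩ hv))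
  exact SetLike.mem_coe.mpr (le_sSup (mem_classSpans hv) hmem)

lemma classSpans_ne_bot (hΩ : Ω ⊆ Metric.sphere (0 : Euc n) 1)
    (hωspan : Submodule.span ℝ ω = ⊤) {W : Submodule ℝ (Euc n)}
    (hW : W ∈ ClassSpans Ω ω) : W ≠ ⊥ := by
  obtain ⟨v, hv, rfl⟩ := hW
  intro hbot
  have hmem : v ∈ Submodule.span ℝ {v' | EqvRel Ω ω v v'} :=
    Submodule.subset_span (eqv_refl hωspan hv (ne_zero_of_mem hΩ hv))
  rw [hbot, Submodule.mem_bot] at hmem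
  exact ne_zero_of_mem hΩ hv hmem

lemma finite_classSpans (hΩ : Ω ⊆ Metric.sphere (0 : Euc n) 1)
    (hωspan : Submodule.span ℝ ω = ⊤) : (ClassSpans Ω ω).Finite := by
  have hind : iSupIndep (fun W : ClassSpans Ω ω => (W : Submodule ℝ (Euc n))) :=
    (sSupIndep_iff _).mp (sSupIndep_classSpans hωspan)
  haveI := hind.fintypeNeBotOfFiniteDimensional
  rw [← Set.finite_coe_iff]
  exact Finite.of_injective
    (fun W : ClassSpans Ω ω =>
      (⟨W, classSpans_ne_bot hΩ hωspan W.2⟩ :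
        {i : ClassSpans Ω ω // (i : Submodule ℝ (Euc n)) ≠ ⊥}))
    (fun a b h => by simpa [Subtype.ext_iff] using congrArg Subtype.val h)

lemma eqv_of_span_eq (hΩ : Ω ⊆ Metric.sphere (0 : Euc n) 1)
    (hωspan : Submodule.span ℝ ω = ⊤) {v v' : Euc n} (hv : v ∈ Ω) (hv' : v' ∈ Ω)
    (h : Submodule.span ℝ (cls Ω ω v) = Submodule.span ℝ (cls Ω ω v')) :
    EqvRel Ω ω v v' := by
  by_contra hne
  have hvne := ne_zero_of_mem hΩ hv
  have hrefl : EqvRel Ω ω v v := eqv_refl hωspan hv hvne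
  have hvmem : v ∈ Submodule.span ℝ (cls Ω ω v') := h ▸ Submodule.subset_span hrefl
  refine hvne (key_zero hωspan hvmem ?_)
  intro u hu htouch
  exact separation (fun he => hne (eqvRel_symm he)) hu htouch v hrefl

lemma card_le (hΩ : Ω ⊆ Metric.sphere (0 : Euc n) 1) (hω : ω ⊆ Metric.sphere (0 : Euc n) 1)
    (hΩspan : Submodule.span ℝ Ω = ⊤) (hωspan : Submodule.span ℝ ω = ⊤) :
    Nat.card ↥(ClassSpans Ω ω) ≤ Nat.card ↥(ClassSpans ω Ω) := by
  haveI : Finite ↥(ClassSpans ω Ω) := (finite_classSpans hω hΩspan).to_subtype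
  have hch : ∀ W : ClassSpans Ω ω, ∃ (W' : ClassSpans ω Ω) (v u : Euc n),
      v ∈ Ω ∧ u ∈ ω ∧ ⟪v, u⟫ ≠ 0 ∧
      (W : Submodule ℝ (Euc n)) = Submodule.span ℝ (cls Ω ω v) ∧
      (W' : Submodule ℝ (Euc n)) = Submodule.span ℝ (cls ω Ω u) := by
    rintro ⟨W, v, hv, rfl⟩
    obtain ⟨u, hu, hvu⟩ := exists_touch hωspan (ne_zero_of_mem hΩ hv)
    exact ⟨⟨_, mem_classSpans hu⟩, v, u, hv, hu, hvu, rfl, rfl⟩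
  choose φ vW uW hvΩ huω hvu hWv hWu using hch
  refine Nat.card_le_card_of_injective φ ?_
  intro W₁ W₂ heq
  have hspan : Submodule.span ℝ (cls ω Ω (uW W₁)) = Submodule.span ℝ (cls ω Ω (uW W₂)) := by
    rw [← hWu W₁, ← hWu W₂, heq]
  have huu : EqvRel ω Ω (uW W₁) (uW W₂) :=
    eqv_of_span_eq hω hΩspan (huω W₁) (huω W₂) hspan
  have hvv : EqvRel Ω ω (vW W₁) (vW W₂) := by
    refine transfer huu (vW W₁) (hvΩ W₁) (vW W₂) (hvΩ W₂) ?_ ?_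
    · rw [real_inner_comm]; exact hvu W₁
    · rw [real_inner_comm]; exact hvu W₂
  apply Subtype.ext
  rw [hWv W₁, hWv W₂, cls_eq hvv]

end St14

namespace St14

variable {n : ℕ}

lemma pack {m : ℕ} {s : Set (Submodule ℝ (Euc n))} (e : Fin m ≃ ↥s)
    (hind : sSupIndep s) (htop : sSup s = ⊤) :
    ∃ V : Fin m → Submodule ℝ (Euc n), Function.Injective V ∧ Set.range V = s ∧
      iSupIndep V ∧ (⨆ i, V i) = ⊤ := by
  refine ⟨fun i => ↑(e i), Subtype.val_injective.comp e.injective, ?_, ?_, ?_⟩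
  · show Set.range (Subtype.val ∘ e) = s
    rw [Set.range_comp, Equiv.range_eq_univ, Set.image_univ, Subtype.range_coe]
  · exact ((sSupIndep_iff s).mp hind).comp e.injective
  · rw [show (⨆ i, (↑(e i) : Submodule ℝ (Euc n))) = ⨆ a : ↥s, ↑a from e.iSup_comp,
      ← sSup_eq_iSup', htop]

end St14

/-- Lemma of relations: if `Ω, ω ⊆ S^{n-1}` both span `ℝⁿ`, then the
spans of the `≃`-equivalence classes of `Ω` and of `ω` are finite families of the same
cardinality, each decomposing `ℝⁿ` as a direct sum. -/
theorem statement14 (n : ℕ) (Ω ω : Set (Euc n))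
    (hΩ : Ω ⊆ Metric.sphere (0 : Euc n) 1) (hω : ω ⊆ Metric.sphere (0 : Euc n) 1)
    (hΩspan : Submodule.span ℝ Ω = ⊤) (hωspan : Submodule.span ℝ ω = ⊤) :
    ∃ (m : ℕ) (V U : Fin m → Submodule ℝ (Euc n)),
      Function.Injective V ∧ Function.Injective U ∧
      Set.range V = ClassSpans Ω ω ∧ Set.range U = ClassSpans ω Ω ∧
      iSupIndep V ∧ (⨆ i, V i) = ⊤ ∧
      iSupIndep U ∧ (⨆ i, U i) = ⊤ := by
  classical
  haveI : Finite ↥(ClassSpans Ω ω) := (St14.finite_classSpans hΩ hωspan).to_subtype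
  haveI : Finite ↥(ClassSpans ω Ω) := (St14.finite_classSpans hω hΩspan).to_subtype
  have hcard : Nat.card ↥(ClassSpans ω Ω) = Nat.card ↥(ClassSpans Ω ω) :=
    le_antisymm (St14.card_le hω hΩ hωspan hΩspan) (St14.card_le hΩ hω hΩspan hωspan)
  obtain ⟨V, hVinj, hVrange, hVind, hVtop⟩ :=
    St14.pack (Finite.equivFin ↥(ClassSpans Ω ω)).symm (St14.sSupIndep_classSpans hωspan)
      (St14.sSup_classSpans hΩ hΩspan hωspan)
  obtain ⟨U, hUinj, hUrange, hUind, hUtop⟩ :=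
    St14.pack (Finite.equivFinOfCardEq hcard).symm (St14.sSupIndep_classSpans hΩspan)
      (St14.sSup_classSpans hω hωspan hΩspan)
  exact ⟨_, V, U, hVinj, hUinj, hVrange, hUrange, hVind, hVtop, hUind, hUtop⟩
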